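/- arXiv:1809.00508 — 6 statements merged into one kernel-verified Lean document; each statement's English description precedes it below -/
import Mathlib

section
/- Nullstellensatz over F_2: (a) for every subset A ⊆ F_2^n, V(I(A)) = A; (b) for every ideal J of F_2[x_1,...,x_n], I(V(J)) = J + I_2, where I_2 is the ideal generated by x_i + x_i^2 for i=1,...,n. -/
open MvPolynomial

/-- The vanishing set of a set of polynomials over `F_2`. -/
def zeroSet {n : ℕ} (J : Set (MvPolynomial (Fin n) (ZMod 2))) : Set (Fin n → ZMod 2) :=
  {u | ∀ a ∈ J, MvPolynomial.eval u a = 0}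

/-- The ideal of polynomials vanishing on a set of points. -/
noncomputable def vanishIdeal {n : ℕ} (X : Set (Fin n → ZMod 2)) : Ideal (MvPolynomial (Fin n) (ZMod 2)) where
  carrier := {a | ∀ u ∈ X, MvPolynomial.eval u a = 0}
  zero_mem' := by intro u _; simp
  add_mem' := by intro a b ha hb u hu; simp [ha u hu, hb u hu]
  smul_mem' := by intro c a ha u hu; simp [smul_eq_mul, ha u hu]

/-- The ideal `I_2 = ⟨x_i + x_i², i = 1..n⟩`. -/
noncomputable def fieldIdeal (n : ℕ) : Ideal (MvPolynomial (Fin n) (ZMod 2)) :=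
  Ideal.span (Set.range fun i : Fin n => MvPolynomial.X i + (MvPolynomial.X i) ^ 2)

lemma mem_vanishIdeal {n : ℕ} {X : Set (Fin n → ZMod 2)} {a : MvPolynomial (Fin n) (ZMod 2)} :
    a ∈ vanishIdeal X ↔ ∀ u ∈ X, MvPolynomial.eval u a = 0 := Iff.rfl

lemma eval_fieldIdeal {n : ℕ} {p : MvPolynomial (Fin n) (ZMod 2)}
    (hp : p ∈ fieldIdeal n) (u : Fin n → ZMod 2) : MvPolynomial.eval u p = 0 := by
  have hle : fieldIdeal n ≤ RingHom.ker (MvPolynomial.eval u) := by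
    rw [fieldIdeal, Ideal.span_le]
    rintro _ ⟨i, rfl⟩
    have h2 : ∀ x : ZMod 2, x + x = 0 := by decide
    simp [RingHom.mem_ker, h2 (u i)]
  exact hle hp

lemma exists_reduce {n : ℕ} (p : MvPolynomial (Fin n) (ZMod 2)) :
    ∃ q ∈ restrictDegree (Fin n) (ZMod 2) 1, p - q ∈ fieldIdeal n := by
  classical
  set I := fieldIdeal n with hI
  set mk := Ideal.Quotient.mk I with hmk
  have hX : ∀ i : Fin n, mk (X i) ^ 2 = mk (X i) := by
    intro i
    have h0 : mk (X i + X i ^ 2) = 0 :=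
      Ideal.Quotient.eq_zero_iff_mem.mpr (Ideal.subset_span ⟨i, rfl⟩)
    have h1 : mk (X i) + mk (X i) ^ 2 = 0 := by simpa using h0
    have h2 : mk (X i) ^ 2 = -mk (X i) := eq_neg_of_add_eq_zero_right h1
    rw [h2, ← map_neg, CharTwo.neg_eq]
  have hXpow : ∀ (i : Fin n) (k : ℕ), mk (X i) ^ (k + 1) = mk (X i) := by
    intro i k
    induction k with
    | zero => exact pow_one _
    | succ m ih => rw [pow_succ, ih, ← sq, hX]
  let trunc : (Fin n →₀ ℕ) → (Fin n →₀ ℕ) := fun d => d.mapRange (fun e => min e 1) (by simp)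
  refine ⟨∑ d ∈ p.support, monomial (trunc d) (p.coeff d), ?_, ?_⟩
  · refine Submodule.sum_mem _ fun d _ => ?_
    rw [mem_restrictDegree]
    intro s hs i
    rw [support_monomial] at hs
    split_ifs at hs
    · simp at hs
    · simp only [Finset.mem_singleton] at hs
      subst hs
      exact min_le_right _ _
  · rw [← Ideal.Quotient.eq]
    conv_lhs => rw [← support_sum_monomial_coeff p]
    rw [map_sum, map_sum]
    refine Finset.sum_congr rfl fun d hd => ?_
    rw [monomial_eq, monomial_eq, map_mul, map_mul]
    congr 1
    have hmr : (trunc d).prod (fun i e => mk (X i) ^ e)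
        = d.prod (fun i e => mk (X i) ^ (min e 1)) := by
      exact Finsupp.prod_mapRange_index (fun a => pow_zero _)
    have hmap : ∀ f : Fin n →₀ ℕ, mk (f.prod fun i e => X i ^ e)
        = f.prod fun i e => mk (X i) ^ e := fun f => by
      rw [Finsupp.prod, Finsupp.prod, map_prod]
      exact Finset.prod_congr rfl fun i _ => map_pow _ _ _
    rw [hmap, hmap, hmr]
    refine Finsupp.prod_congr fun i hi => ?_
    have h1 : 1 ≤ d i := Nat.one_le_iff_ne_zero.mpr (Finsupp.mem_support_iff.mp hi)
    have : min (d i) 1 = 1 := by omega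
    rw [this, pow_one]
    obtain ⟨k, hk⟩ : ∃ k, d i = k + 1 := ⟨d i - 1, by omega⟩
    rw [hk, hXpow]

lemma mem_fieldIdeal_of_eval_zero {n : ℕ} {p : MvPolynomial (Fin n) (ZMod 2)}
    (h : ∀ u, MvPolynomial.eval u p = 0) : p ∈ fieldIdeal n := by
  obtain ⟨q, hq1, hq2⟩ := exists_reduce p
  have hcard : Fintype.card (ZMod 2) - 1 = 1 := by simp
  have hq0 : q = 0 := by
    refine eq_zero_of_eval_eq_zero (Fin n) (ZMod 2) q (fun v => ?_) (by rwa [hcard])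
    have h1 := eval_fieldIdeal hq2 v
    rw [map_sub, h v, zero_sub, neg_eq_zero] at h1
    exact h1
  rw [hq0, sub_zero] at hq2
  exact hq2

lemma eval_indicator {n : ℕ} (u v : Fin n → ZMod 2) :
    MvPolynomial.eval v (MvPolynomial.indicator u) = if v = u then 1 else 0 := by
  split_ifs with h
  · rw [h]; exact eval_indicator_apply_eq_one u
  · exact eval_indicator_apply_eq_zero v u h

theorem stmt2 {n : ℕ} :
    (∀ A : Set (Fin n → ZMod 2), zeroSet (vanishIdeal A : Set (MvPolynomial (Fin n) (ZMod 2))) = A) ∧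
    (∀ J : Ideal (MvPolynomial (Fin n) (ZMod 2)),
      vanishIdeal (zeroSet (J : Set (MvPolynomial (Fin n) (ZMod 2)))) = J + fieldIdeal n) := by
  classical
  constructor
  · intro A
    ext u
    simp only [zeroSet, Set.mem_setOf_eq]
    constructor
    · intro hu
      by_contra hA
      have hind : (MvPolynomial.indicator u : MvPolynomial (Fin n) (ZMod 2)) ∈ vanishIdeal A := by
        intro v hv
        rw [eval_indicator, if_neg (fun h : v = u => hA (h ▸ hv))]
      have := hu _ hind
      rw [eval_indicator] at this
      simp at this
    · intro hu a ha
      exact ha u hu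
  · intro J
    apply le_antisymm
    · intro a ha
      set b : MvPolynomial (Fin n) (ZMod 2) :=
        ∑ u : Fin n → ZMod 2, MvPolynomial.C (MvPolynomial.eval u a) * MvPolynomial.indicator u with hb
      have hevalb : ∀ v, MvPolynomial.eval v b = MvPolynomial.eval v a := by
        intro v
        rw [hb, map_sum]
        rw [Finset.sum_eq_single v]
        · simp [eval_indicator]
        · intro u _ hne
          simp [eval_indicator, Ne.symm hne]
        · intro h; exact absurd (Finset.mem_univ v) h
      have hab : a - b ∈ fieldIdeal n :=
        mem_fieldIdeal_of_eval_zero fun v => by simp [hevalb v]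
      have hbmem : b ∈ J + fieldIdeal n := by
        refine Submodule.sum_mem _ fun u _ => ?_
        by_cases h0 : MvPolynomial.eval u a = 0
        · rw [h0, map_zero, zero_mul]; exact Submodule.zero_mem _
        · refine Ideal.mul_mem_left _ _ ?_
          have huz : u ∉ zeroSet (J : Set (MvPolynomial (Fin n) (ZMod 2))) := fun hz => h0 (ha u hz)
          simp only [zeroSet, Set.mem_setOf_eq, not_forall] at huz
          obtain ⟨c, hcJ, hcu⟩ := huz
          have hcu1 : MvPolynomial.eval u c = 1 := by
            have : ∀ x : ZMod 2, x ≠ 0 → x = 1 := by decide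
            exact this _ hcu
          have key : MvPolynomial.indicator u
              = c * MvPolynomial.indicator u + (MvPolynomial.indicator u - c * MvPolynomial.indicator u) := by ring
          rw [key]
          refine Submodule.add_mem _ ?_ ?_
          · exact Submodule.mem_sup_left (Ideal.mul_mem_right _ _ hcJ)
          · refine Submodule.mem_sup_right (mem_fieldIdeal_of_eval_zero fun v => ?_)
            rw [map_sub, map_mul, eval_indicator]
            by_cases hv : v = u
            · subst hv; simp [hcu1, eval_indicator]
            · simp [hv, eval_indicator]
      have : a = b + (a - b) := by ring
      rw [this]
      exact Submodule.add_mem _ hbmem (Submodule.mem_sup_right hab)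
    · rw [Ideal.add_eq_sup]
      refine sup_le ?_ ?_
      · intro x hx u hu
        exact hu x hx
      · intro x hx u _
        exact eval_fieldIdeal hx u
end

section
/- For a finite knowledge base K={F_1,...,F_m} and a formula G, the following are equivalent: (1) K ⊨ G; (2) 1+P(G) belongs to the ideal ⟨1+P(F_1),...,1+P(F_m)⟩ + I_2; (3) V(⟨1+P(F_1),...,1+P(F_m)⟩) ⊆ V(⟨1+P(G)⟩). -/
inductive Fm (V : Type) : Type
  | bot : Fm V
  | var : V → Fm V
  | not : Fm V → Fm V
  | and : Fm V → Fm V → Fm V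
  | or  : Fm V → Fm V → Fm V
  | imp : Fm V → Fm V → Fm V
  | iff : Fm V → Fm V → Fm V

def Fm.eval {V : Type} (v : V → Bool) : Fm V → Bool
  | .bot => false
  | .var p => v p
  | .not F => !(F.eval v)
  | .and F G => F.eval v && G.eval v
  | .or F G => F.eval v || G.eval v
  | .imp F G => !(F.eval v) || G.eval v
  | .iff F G => F.eval v == G.eval v

noncomputable def Fm.poly {n : ℕ} : Fm (Fin n) → MvPolynomial (Fin n) (ZMod 2)
  | .bot => 0
  | .var i => MvPolynomial.X i
  | .not F => 1 + F.poly
  | .and F G => F.poly * G.poly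
  | .or F G => F.poly + G.poly + F.poly * G.poly
  | .imp F G => 1 + F.poly + F.poly * G.poly
  | .iff F G => 1 + F.poly + G.poly

/-!
Under the identification of truth values with `0, 1 ∈ 𝔽₂`, `P F` evaluates at a point to the truth
value of `F`, so (1) and (3) both say that every common zero of the `1 + P(Fᵢ)` is a zero of
`1 + P(G)`. For (2), over a finite field `𝔽_q` every polynomial is congruent modulo the field
equations `Xᵢ^q - Xᵢ` to one of degree `< q` in each variable, and such a polynomial vanishing on
all of `𝔽_qⁿ` is zero; so the field equations generate the ideal of polynomials vanishing
everywhere. If `g` vanishes on the common zeros of `f₁, …, f_m`, then `g · ∏ (1 - fⱼ^(q-1))`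
vanishes everywhere, while `g · (1 - ∏ (1 - fⱼ^(q-1)))` lies in `⟨f₁, …, f_m⟩`.
-/

universe u

theorem Ideal.one_sub_prod_one_sub_pow_mem_span_image {R ι : Type*} [CommRing R]
    (s : Finset ι) (f : ι → R) {k : ℕ} (hk : k ≠ 0) :
    1 - ∏ i ∈ s, (1 - f i ^ k) ∈ Ideal.span (f '' s) := by
  rw [← Ideal.Quotient.eq_zero_iff_mem, map_sub, map_one, map_prod, sub_eq_zero, eq_comm]
  refine Finset.prod_eq_one fun i hi => ?_
  rw [map_sub, map_one, map_pow,
    Ideal.Quotient.eq_zero_iff_mem.2 (Ideal.subset_span (Set.mem_image_of_mem f hi)), zero_pow hk,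
    sub_zero]

namespace MvPolynomial

variable {σ K : Type u} [Field K] [Fintype K]

variable (σ K) in
noncomputable def fieldEquationsIdeal : Ideal (MvPolynomial σ K) :=
  Ideal.span (Set.range fun i : σ => X i ^ Fintype.card K - X i)

theorem X_pow_card_sub_X_mem_fieldEquationsIdeal (i : σ) :
    X i ^ Fintype.card K - X i ∈ fieldEquationsIdeal σ K :=
  Ideal.subset_span ⟨i, rfl⟩

theorem fieldEquationsIdeal_le_ker_eval (x : σ → K) :
    fieldEquationsIdeal σ K ≤ RingHom.ker (eval x) := by
  rw [fieldEquationsIdeal, Ideal.span_le]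
  rintro _ ⟨i, rfl⟩
  simp [FiniteField.pow_card]

theorem exists_mem_restrictDegree_monomial_sub_mem_fieldEquationsIdeal (e : σ →₀ ℕ) (c : K) :
    ∃ r ∈ restrictDegree σ K (Fintype.card K - 1),
      monomial e c - r ∈ fieldEquationsIdeal σ K := by
  have hq : 1 < Fintype.card K := Fintype.one_lt_card
  induction hd : e.degree using Nat.strong_induction_on generalizing e with
  | _ d ih =>
  by_cases hle : ∀ i, e i ≤ Fintype.card K - 1
  · refine ⟨monomial e c, ?_, by simp⟩
    rw [mem_restrictDegree]
    intro s hs i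
    rw [Finset.mem_singleton.1 (support_monomial_subset hs)]
    exact hle i
  push Not at hle
  obtain ⟨i, hi⟩ := hle
  -- with `q = Fintype.card K`, `X i ^ q ≡ X i` lowers the exponent of `X i` in `e` by `q - 1`
  set e' := e - Finsupp.single i (Fintype.card K - 1)
  have he : e' + Finsupp.single i (Fintype.card K - 1) = e :=
    tsub_add_cancel_of_le (Finsupp.single_le_iff.2 hi.le)
  have he₁ : e - Finsupp.single i (Fintype.card K) + Finsupp.single i (Fintype.card K) = e :=
    tsub_add_cancel_of_le (Finsupp.single_le_iff.2 (by omega))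
  have he₂ : e - Finsupp.single i (Fintype.card K) + Finsupp.single i 1 = e' := by
    ext j
    rcases eq_or_ne i j with rfl | hij
    · simp only [e', Finsupp.tsub_apply, Finsupp.add_apply, Finsupp.single_eq_same]
      omega
    · simp [e', hij]
  have hmul : monomial e c - monomial e' c =
      monomial (e - Finsupp.single i (Fintype.card K)) c * (X i ^ Fintype.card K - X i) := by
    rw [mul_sub, X_pow_eq_monomial, X, monomial_mul, monomial_mul, mul_one, he₁, he₂]
  have hdeg : e'.degree < d := by rw [← hd, ← he, map_add, Finsupp.degree_single]; omega
  obtain ⟨r, hr, her⟩ := ih e'.degree hdeg e' rfl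
  refine ⟨r, hr, ?_⟩
  rw [← sub_add_sub_cancel _ (monomial e' c), hmul]
  exact add_mem (Ideal.mul_mem_left _ _ (X_pow_card_sub_X_mem_fieldEquationsIdeal i)) her

theorem exists_mem_restrictDegree_sub_mem_fieldEquationsIdeal (p : MvPolynomial σ K) :
    ∃ r ∈ restrictDegree σ K (Fintype.card K - 1), p - r ∈ fieldEquationsIdeal σ K := by
  induction p using induction_on' with
  | monomial e c => exact exists_mem_restrictDegree_monomial_sub_mem_fieldEquationsIdeal e c
  | add p p' hp hp' =>
    obtain ⟨r, hr, hpr⟩ := hp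
    obtain ⟨r', hr', hpr'⟩ := hp'
    exact ⟨r + r', add_mem hr hr', by rw [add_sub_add_comm]; exact add_mem hpr hpr'⟩

theorem mem_fieldEquationsIdeal_iff [Finite σ] {p : MvPolynomial σ K} :
    p ∈ fieldEquationsIdeal σ K ↔ ∀ x, eval x p = 0 := by
  refine ⟨fun hp x => fieldEquationsIdeal_le_ker_eval x hp, fun hp => ?_⟩
  obtain ⟨r, hr, hpr⟩ := exists_mem_restrictDegree_sub_mem_fieldEquationsIdeal p
  have hr0 : r = 0 := eq_zero_of_eval_eq_zero σ K r (fun x => by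
    simpa [hp x] using fieldEquationsIdeal_le_ker_eval x hpr) hr
  simpa [hr0] using hpr

theorem mem_span_image_sup_fieldEquationsIdeal_iff [Finite σ] {ι : Type*} (s : Finset ι)
    (f : ι → MvPolynomial σ K) (g : MvPolynomial σ K) :
    g ∈ Ideal.span (f '' s) ⊔ fieldEquationsIdeal σ K ↔
      ∀ x, (∀ i ∈ s, eval x (f i) = 0) → eval x g = 0 := by
  constructor
  · intro hg x hx
    have hspan : Ideal.span (f '' s) ≤ RingHom.ker (eval x) := by
      rw [Ideal.span_le]; rintro _ ⟨i, hi, rfl⟩; exact hx i hi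
    exact sup_le hspan (fieldEquationsIdeal_le_ker_eval x) hg
  · intro hg
    set q := Fintype.card K
    -- `∏ (1 - f i ^ (q - 1))` is the indicator of the common zero set of the `f i`
    have hsplit : g = g * (1 - ∏ i ∈ s, (1 - f i ^ (q - 1))) + g * ∏ i ∈ s, (1 - f i ^ (q - 1)) :=
      by ring
    rw [hsplit]
    refine add_mem (Ideal.mem_sup_left (Ideal.mul_mem_left _ _
      (Ideal.one_sub_prod_one_sub_pow_mem_span_image s f
        (Nat.sub_ne_zero_of_lt Fintype.one_lt_card))))
      (Ideal.mem_sup_right (mem_fieldEquationsIdeal_iff.2 fun x => ?_))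
    by_cases hx : ∀ i ∈ s, eval x (f i) = 0
    · simp [hg x hx]
    push Not at hx
    obtain ⟨i, hi, hfi⟩ := hx
    have hfactor : eval x (1 - f i ^ (q - 1)) = 0 := by
      rw [map_sub, map_one, map_pow, FiniteField.pow_card_sub_one_eq_one _ hfi, sub_self]
    rw [map_mul, map_prod, Finset.prod_eq_zero hi hfactor, mul_zero]

end MvPolynomial

open MvPolynomial

def boolEquivZModTwo : Bool ≃ ZMod 2 where
  toFun b := cond b 1 0
  invFun x := decide (x = 1)
  left_inv b := by cases b <;> rfl
  right_inv x := by fin_cases x <;> rfl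

theorem Fm.eval_poly {n : ℕ} (v : Fin n → Bool) (F : Fm (Fin n)) :
    MvPolynomial.eval (fun i => boolEquivZModTwo (v i)) F.poly = boolEquivZModTwo (F.eval v) := by
  induction F with
  | bot => rfl
  | var i => simp only [Fm.poly, Fm.eval, MvPolynomial.eval_X]
  | not F ih =>
    simp only [Fm.poly, Fm.eval, map_add, map_one, ih]
    cases F.eval v <;> rfl
  | and F G ihF ihG =>
    simp only [Fm.poly, Fm.eval, map_mul, ihF, ihG]
    cases F.eval v <;> cases G.eval v <;> rfl
  | or F G ihF ihG =>
    simp only [Fm.poly, Fm.eval, map_add, map_mul, ihF, ihG]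
    cases F.eval v <;> cases G.eval v <;> rfl
  | imp F G ihF ihG =>
    simp only [Fm.poly, Fm.eval, map_add, map_mul, map_one, ihF, ihG]
    cases F.eval v <;> cases G.eval v <;> rfl
  | iff F G ihF ihG =>
    simp only [Fm.poly, Fm.eval, map_add, map_one, ihF, ihG]
    cases F.eval v <;> cases G.eval v <;> rfl

theorem Fm.eval_one_add_poly_eq_zero_iff {n : ℕ} (v : Fin n → Bool) (F : Fm (Fin n)) :
    MvPolynomial.eval (fun i => boolEquivZModTwo (v i)) (1 + F.poly) = 0 ↔ F.eval v = true := by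
  rw [map_add, map_one, F.eval_poly v]
  cases F.eval v <;> decide

theorem Fm.entails_iff_forall_eval {n : ℕ} (K : Finset (Fm (Fin n))) (G : Fm (Fin n)) :
    (∀ v : Fin n → Bool, (∀ F ∈ K, F.eval v = true) → G.eval v = true) ↔
      ∀ u : Fin n → ZMod 2,
        (∀ F ∈ K, MvPolynomial.eval u (1 + F.poly) = 0) → MvPolynomial.eval u (1 + G.poly) = 0 :=
  (Equiv.piCongrRight fun _ => boolEquivZModTwo).forall_congr fun v => by
    simp only [← Fm.eval_one_add_poly_eq_zero_iff v]
    rfl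

theorem zeroSet_span {n : ℕ} (S : Set (MvPolynomial (Fin n) (ZMod 2))) :
    zeroSet (Ideal.span S : Set (MvPolynomial (Fin n) (ZMod 2))) = zeroSet S := by
  ext u
  refine ⟨fun hu a ha => hu a (Ideal.subset_span ha), fun hu a ha => ?_⟩
  exact (Ideal.span_le (I := RingHom.ker (eval u)).2 hu) ha

theorem fieldIdeal_eq_fieldEquationsIdeal (n : ℕ) :
    fieldIdeal n = fieldEquationsIdeal (Fin n) (ZMod 2) := by
  unfold fieldIdeal fieldEquationsIdeal
  congr! 3 with i
  rw [ZMod.card, CharTwo.sub_eq_add, add_comm]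

theorem stmt4 {n : ℕ} (K : Finset (Fm (Fin n))) (G : Fm (Fin n)) :
    ((∀ v : Fin n → Bool, (∀ F ∈ K, F.eval v = true) → G.eval v = true) ↔
      1 + G.poly ∈ Ideal.span ((fun F : Fm (Fin n) => 1 + F.poly) '' K) + fieldIdeal n) ∧
    ((∀ v : Fin n → Bool, (∀ F ∈ K, F.eval v = true) → G.eval v = true) ↔
      zeroSet ((Ideal.span ((fun F : Fm (Fin n) => 1 + F.poly) '' K) :
          Ideal (MvPolynomial (Fin n) (ZMod 2))) : Set (MvPolynomial (Fin n) (ZMod 2))) ⊆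
        zeroSet ((Ideal.span {1 + G.poly} : Ideal (MvPolynomial (Fin n) (ZMod 2))) :
          Set (MvPolynomial (Fin n) (ZMod 2)))) := by
  refine ⟨(Fm.entails_iff_forall_eval K G).trans ?_, (Fm.entails_iff_forall_eval K G).trans ?_⟩
  · rw [Submodule.add_eq_sup, fieldIdeal_eq_fieldEquationsIdeal,
      mem_span_image_sup_fieldEquationsIdeal_iff]
  · rw [zeroSet_span, zeroSet_span]
    simp [Set.subset_def, zeroSet]
end

section
/- Lifting Lemma: Let δ be a forgetting operator for a variable p, let F,G be formulas over L, and let v be a valuation on L∖{p}. Then v ⊨ δ(F,G) if and only if there exists a valuation v̂ on L extending v (agreeing with v on L∖{p}) such that v̂ ⊨ F∧G. -/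
/-- The set of propositional variables occurring in a formula. -/
def Fm.vars {V : Type} : Fm V → Set V
  | .bot => ∅
  | .var q => {q}
  | .not F => F.vars
  | .and F G => F.vars ∪ G.vars
  | .or F G => F.vars ∪ G.vars
  | .imp F G => F.vars ∪ G.vars
  | .iff F G => F.vars ∪ G.vars

/-- Logical entailment `K ⊨ F`. -/
def Entails {V : Type} (K : Set (Fm V)) (F : Fm V) : Prop :=
  ∀ v : V → Bool, (∀ G ∈ K, G.eval v = true) → F.eval v = true

/-- The canonical conservative retraction `[K, L∖{p}]`:
all formulas not containing `p` entailed by `K`. -/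
def Retract {V : Type} (K : Set (Fm V)) (p : V) : Set (Fm V) :=
  {H | p ∉ H.vars ∧ Entails K H}

/-- `δ` is a forgetting operator for the variable `p`: its outputs avoid `p`, and
`δ F G` is logically equivalent to the canonical conservative retraction `[{F,G}, L∖{p}]`. -/
structure IsForgetting {V : Type} (p : V) (δ : Fm V → Fm V → Fm V) : Prop where
  avoid : ∀ F G, p ∉ (δ F G).vars
  equiv : ∀ F G (v : V → Bool),
    (δ F G).eval v = true ↔ ∀ H ∈ Retract ({F, G} : Set (Fm V)) p, H.eval v = true

def Fm.varList {V : Type} : Fm V → List V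
  | .bot => []
  | .var q => [q]
  | .not F => F.varList
  | .and F G => F.varList ++ G.varList
  | .or F G => F.varList ++ G.varList
  | .imp F G => F.varList ++ G.varList
  | .iff F G => F.varList ++ G.varList

theorem Fm.mem_varList {V : Type} {F : Fm V} {q : V} : q ∈ F.varList ↔ q ∈ F.vars := by
  induction F <;> simp [Fm.varList, Fm.vars, *]

theorem Fm.eval_congr {V : Type} (F : Fm V) (v w : V → Bool)
    (h : ∀ q ∈ F.vars, v q = w q) : F.eval v = F.eval w := by
  induction F with
  | bot => rfl
  | var q => exact h q (by simp [Fm.vars])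
  | not F ih => simp [Fm.eval, ih h]
  | and F G ihF ihG | or F G ihF ihG | imp F G ihF ihG | iff F G ihF ihG =>
    simp only [Fm.eval,
      ihF (fun q hq => h q (Set.mem_union_left _ hq)),
      ihG (fun q hq => h q (Set.mem_union_right _ hq))]

theorem stmt5' {V : Type} (p : V) (δ : Fm V → Fm V → Fm V) (hδ : IsForgetting p δ)
    (F G : Fm V) (v : V → Bool) :
    (δ F G).eval v = true ↔
      ∃ vh : V → Bool, (∀ q, q ≠ p → vh q = v q) ∧ F.eval vh = true ∧ G.eval vh = true := by
  classical
  constructor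
  · intro hδv
    by_contra hno
    push_neg at hno
    set lit : V → Fm V := fun q =>
      if q = p then Fm.not Fm.bot else (if v q then Fm.var q else Fm.not (Fm.var q)) with hlit
    set conj : List V → Fm V := fun l =>
      l.foldr (fun q acc => Fm.and (lit q) acc) (Fm.not Fm.bot) with hconj
    have hvars : ∀ l : List V, p ∉ (conj l).vars := by
      intro l
      induction l with
      | nil => simp [hconj, Fm.vars]
      | cons a l ih =>
        simp only [hconj, List.foldr_cons, Fm.vars, Set.mem_union]
        rintro (h | h)
        · by_cases hap : a = p
          · simp [hlit, hap, Fm.vars] at h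
          · by_cases hv : v a <;> simp [hlit, hap, hv, Fm.vars] at h <;> exact hap h.symm
        · exact ih h
    have heval : ∀ (l : List V) (w : V → Bool),
        (conj l).eval w = true ↔ ∀ q ∈ l, (lit q).eval w = true := by
      intro l w
      induction l with
      | nil => simp [hconj, Fm.eval]
      | cons a l ih =>
        simp only [hconj, List.foldr_cons, Fm.eval, Bool.and_eq_true, List.mem_cons]
        constructor
        · rintro ⟨h1, h2⟩ q (rfl | hq)
          · exact h1
          · exact (ih.mp h2) q hq
        · intro h
          exact ⟨h a (Or.inl rfl), ih.mpr fun q hq => h q (Or.inr hq)⟩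
    set L := (F.and G).varList with hL
    set H : Fm V := Fm.not (conj L) with hH
    have hHv : H.eval v = false := by
      have : (conj L).eval v = true := by
        rw [heval]
        intro q _
        by_cases hq : q = p <;> by_cases hv : v q <;> simp [hlit, hq, hv, Fm.eval]
      simp [hH, Fm.eval, this]
    have hHret : H ∈ Retract ({F, G} : Set (Fm V)) p := by
      refine ⟨by simpa [hH, Fm.vars] using hvars L, ?_⟩
      intro w hw
      simp only [hH, Fm.eval, Bool.not_eq_true']
      by_contra hc
      rw [Bool.not_eq_false, heval] at hc
      -- build vh from w
      have hagree : ∀ q ∈ (F.and G).vars, q ≠ p → w q = v q := by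
        intro q hq hqp
        have := hc q (Fm.mem_varList.mpr hq)
        by_cases hv : v q <;> simp [hlit, hqp, hv, Fm.eval] at this <;> simp [this, hv]
      set vh : V → Bool := fun q => if q = p then w p else v q with hvh
      have hwvh : ∀ q ∈ (F.and G).vars, w q = vh q := by
        intro q hq
        by_cases hqp : q = p
        · simp [hvh, hqp]
        · simp [hvh, hqp, hagree q hq hqp]
      have hF : F.eval vh = true := by
        rw [← Fm.eval_congr F w vh fun q hq => hwvh q (Set.mem_union_left _ hq)]
        exact hw F (Or.inl rfl)
      have hG : G.eval vh = true := by
        rw [← Fm.eval_congr G w vh fun q hq => hwvh q (Set.mem_union_right _ hq)]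
        exact hw G (Or.inr rfl)
      exact hno vh (fun q hq => by simp [hvh, hq]) hF hG
    have := (hδ.equiv F G v).mp hδv H hHret
    rw [hHv] at this
    exact Bool.false_ne_true this
  · rintro ⟨vh, hag, hF, hG⟩
    rw [hδ.equiv]
    rintro H ⟨hp, hent⟩
    have := hent vh (by rintro K (rfl | rfl)
                        · exact hF
                        · exact hG)
    rwa [Fm.eval_congr H v vh fun q hq => (hag q (fun h => hp (h ▸ hq))).symm]
/-- Lifting Lemma. -/
theorem stmt5 {V : Type} (p : V) (δ : Fm V → Fm V → Fm V) (hδ : IsForgetting p δ)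
    (F G : Fm V) (v : V → Bool) :
    (δ F G).eval v = true ↔
      ∃ vh : V → Bool, (∀ q, q ≠ p → vh q = v q) ∧ F.eval vh = true ∧ G.eval vh = true := by
  exact stmt5' p δ hδ F G v
end

section
/- If δ_p is a forgetting operator for p, then for every finite knowledge base K, the set δ_p[K] = {δ_p(F,G) : F,G ∈ K} is logically equivalent to the canonical conservative retraction [K, L∖{p}] = {H ∈ Form(L∖{p}) : K ⊨ H}. -/
/-!
If `v` satisfies `δ_p(F, G)`, it satisfies `∃p. F ∧ G`, which lies in `[{F, G}, L∖{p}]`; so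
some value of `p` makes `F` and `G` true together. Since `p` has only two values, a value that
works for every pair of `K` can be chosen uniformly, and resetting `p` to it yields a model of `K`
agreeing with `v` off `p`, hence satisfying every `p`-free consequence of `K`. Conversely
`[{F, G}, L∖{p}] ⊆ [K, L∖{p}]` for `F, G ∈ K`.
-/

namespace Fm

variable {V : Type}

theorem eval_congr_s9 (F : Fm V) {v w : V → Bool} (h : ∀ q ∈ F.vars, v q = w q) :
    F.eval v = F.eval w := by
  induction F with
  | bot => rfl
  | var q => exact h q rfl
  | not F ih => simp only [eval, ih h]
  | and F G ihF ihG | or F G ihF ihG | imp F G ihF ihG | iff F G ihF ihG =>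
    simp only [eval, ihF fun q hq => h q (Or.inl hq), ihG fun q hq => h q (Or.inr hq)]

theorem eval_update_of_notMem_vars [DecidableEq V] {F : Fm V} {p : V} (hp : p ∉ F.vars)
    (v : V → Bool) (b : Bool) : F.eval (Function.update v p b) = F.eval v :=
  F.eval_congr_s9 fun _ hq => Function.update_of_ne (ne_of_mem_of_not_mem hq hp) b v

def const (b : Bool) : Fm V := if b then .not .bot else .bot

@[simp]
theorem eval_const (v : V → Bool) (b : Bool) : (const b).eval v = b := by
  cases b <;> rfl

@[simp]
theorem vars_const (b : Bool) : (const b : Fm V).vars = ∅ := by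
  cases b <;> rfl

def subst [DecidableEq V] (p : V) (b : Bool) : Fm V → Fm V
  | .bot => .bot
  | .var q => if q = p then const b else .var q
  | .not F => .not (F.subst p b)
  | .and F G => .and (F.subst p b) (G.subst p b)
  | .or F G => .or (F.subst p b) (G.subst p b)
  | .imp F G => .imp (F.subst p b) (G.subst p b)
  | .iff F G => .iff (F.subst p b) (G.subst p b)

variable [DecidableEq V]

theorem eval_subst (F : Fm V) (p : V) (b : Bool) (v : V → Bool) :
    (F.subst p b).eval v = F.eval (Function.update v p b) := by
  induction F with
  | bot => rfl
  | var q =>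
    by_cases hq : q = p
    · subst hq; simp [subst, eval]
    · simp [subst, eval, hq]
  | not F ih => simp only [subst, eval, ih]
  | and F G ihF ihG | or F G ihF ihG | imp F G ihF ihG | iff F G ihF ihG =>
    simp only [subst, eval, ihF, ihG]

theorem notMem_vars_subst (F : Fm V) (p : V) (b : Bool) : p ∉ (F.subst p b).vars := by
  induction F with
  | bot => exact id
  | var q =>
    by_cases hq : q = p
    · simp [subst, hq]
    · simpa [subst, hq, vars] using Ne.symm hq
  | not F ih => exact ih
  | and F G ihF ihG | or F G ihF ihG | imp F G ihF ihG | iff F G ihF ihG =>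
    simp only [subst, vars, Set.mem_union, not_or]
    exact ⟨ihF, ihG⟩

/-- The existential quantification `∃p. F`. -/
def forget (p : V) (F : Fm V) : Fm V := .or (F.subst p true) (F.subst p false)

theorem eval_forget (p : V) (F : Fm V) (v : V → Bool) :
    (F.forget p).eval v = true ↔ ∃ b, F.eval (Function.update v p b) = true := by
  simp only [forget, eval, eval_subst, Bool.or_eq_true, Bool.exists_bool]
  tauto

theorem notMem_vars_forget (p : V) (F : Fm V) : p ∉ (F.forget p).vars := by
  simp only [forget, vars, Set.mem_union, not_or]
  exact ⟨notMem_vars_subst F p true, notMem_vars_subst F p false⟩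

end Fm

theorem Entails.mono {V : Type} {K K' : Set (Fm V)} {F : Fm V} (hK : K ⊆ K') (h : Entails K F) :
    Entails K' F :=
  fun v hv => h v fun G hG => hv G (hK hG)

theorem retract_mono {V : Type} {K K' : Set (Fm V)} (hK : K ⊆ K') (p : V) :
    Retract K p ⊆ Retract K' p :=
  fun _ ⟨hp, hH⟩ => ⟨hp, hH.mono hK⟩

theorem forget_and_mem_retract {V : Type} [DecidableEq V] (p : V) (F G : Fm V) :
    (F.and G).forget p ∈ Retract {F, G} p := by
  refine ⟨Fm.notMem_vars_forget p _, fun v hv => (Fm.eval_forget p _ v).mpr ⟨v p, ?_⟩⟩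
  simp [Fm.eval, hv F (Set.mem_insert F {G}), hv G (Set.mem_insert_of_mem F rfl)]

theorem exists_update_of_forall_retract_pair {V : Type} [DecidableEq V] {p : V} {F G : Fm V}
    {v : V → Bool} (h : ∀ H ∈ Retract {F, G} p, H.eval v = true) :
    ∃ b, F.eval (Function.update v p b) = true ∧ G.eval (Function.update v p b) = true := by
  obtain ⟨b, hb⟩ := (Fm.eval_forget p _ v).mp (h _ (forget_and_mem_retract p F G))
  exact ⟨b, by simpa [Fm.eval] using hb⟩

theorem Bool.exists_forall_of_forall_pair {α : Type*} {P : Bool → α → Prop} {K : Set α}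
    (h : ∀ F ∈ K, ∀ G ∈ K, ∃ b, P b F ∧ P b G) : ∃ b, ∀ F ∈ K, P b F := by
  by_contra! hc
  obtain ⟨F, hF, hFt⟩ := hc true
  obtain ⟨G, hG, hGf⟩ := hc false
  obtain ⟨b, hbF, hbG⟩ := h F hF G hG
  cases b
  · exact hGf hbG
  · exact hFt hbF

theorem eval_of_mem_retract {V : Type} [DecidableEq V] {K : Set (Fm V)} {p : V} {H : Fm V}
    (hH : H ∈ Retract K p) {v : V → Bool} {b : Bool}
    (hK : ∀ G ∈ K, G.eval (Function.update v p b) = true) : H.eval v = true := by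
  rw [← Fm.eval_update_of_notMem_vars hH.1 v b]
  exact hH.2 _ hK

theorem stmt9_general {V : Type} (p : V) (δ : Fm V → Fm V → Fm V)
    (hδ : IsForgetting p δ) (K : Set (Fm V)) :
    ∀ v : V → Bool,
      (∀ H ∈ Set.image2 δ K K, H.eval v = true) ↔ (∀ H ∈ Retract K p, H.eval v = true) := by
  classical
  intro v
  constructor
  · intro hδK H hH
    obtain ⟨b, hb⟩ := Bool.exists_forall_of_forall_pair fun F hF G hG =>
      exists_update_of_forall_retract_pair <|
        (hδ.equiv F G v).mp (hδK _ (Set.mem_image2_of_mem hF hG))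
    exact eval_of_mem_retract hH hb
  · rintro hK _ ⟨F, hF, G, hG, rfl⟩
    exact (hδ.equiv F G v).mpr fun H hH =>
      hK H (retract_mono (Set.insert_subset hF (Set.singleton_subset_iff.mpr hG)) p hH)

/-- `δ_p[K] = {δ_p(F,G) : F,G ∈ K}` is equivalent to the canonical conservative
retraction `[K, L∖{p}]`. -/
theorem stmt9 {V : Type} [Fintype V] (p : V) (δ : Fm V → Fm V → Fm V)
    (hδ : IsForgetting p δ) (K : Set (Fm V)) (hK : K.Finite) :
    ∀ v : V → Bool,
      (∀ H ∈ Set.image2 δ K K, H.eval v = true) ↔ (∀ H ∈ Retract K p, H.eval v = true) :=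
  stmt9_general p δ hδ K
end

section
/- Characterization of sensitivity: for p occurring in F, the following are equivalent: (1) F is sensitive in p with respect to K, i.e. K ⊭ (F{p/¬p} ↔ F); (2) K ∪ {∂F/∂p} is consistent; (3) the multilinear projection of ∂F/∂p does not belong to the ideal J_K + I_2, where J_K is generated by {1+P(G) : G ∈ K}. -/
def bval (b : Bool) : ZMod 2 := if b then 1 else 0

/-- The map `Φ` reducing every exponent of a polynomial to at most 1
(the multilinear representative modulo `I_2`). -/
noncomputable def squash {n : ℕ} (a : MvPolynomial (Fin n) (ZMod 2)) :
    MvPolynomial (Fin n) (ZMod 2) :=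
  a.support.sum fun m =>
    MvPolynomial.monomial (Finsupp.mapRange (fun e => min e 1) (by simp) m) (a.coeff m)

/-- The polynomial projection `π = Φ ∘ P`. -/
noncomputable def Fm.proj {n : ℕ} (F : Fm (Fin n)) : MvPolynomial (Fin n) (ZMod 2) :=
  squash F.poly

/-- The substitution `F{p/¬p}`. -/
def substNeg {n : ℕ} (p : Fin n) : Fm (Fin n) → Fm (Fin n)
  | .bot => .bot
  | .var q => if q = p then .not (.var p) else .var q
  | .not F => .not (substNeg p F)
  | .and F G => .and (substNeg p F) (substNeg p G)
  | .or F G => .or (substNeg p F) (substNeg p G)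
  | .imp F G => .imp (substNeg p F) (substNeg p G)
  | .iff F G => .iff (substNeg p F) (substNeg p G)

/-- The Boolean derivative `∂F/∂p`, in its semantic form `¬(F{p/¬p} ↔ F)`. -/
def derivFm {n : ℕ} (p : Fin n) (F : Fm (Fin n)) : Fm (Fin n) :=
  Fm.not (Fm.iff (substNeg p F) F)

/-- The part `b` of the decomposition `a = b + x_p·c` (free of `x_p`): `a` with `x_p := 0`. -/
noncomputable def bPart {n : ℕ} (p : Fin n) (a : MvPolynomial (Fin n) (ZMod 2)) :
    MvPolynomial (Fin n) (ZMod 2) :=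
  MvPolynomial.aeval (fun j : Fin n => if j = p then 0 else MvPolynomial.X j) a

/-- The part `c` of the decomposition `a = b + x_p·c` of a multilinear polynomial:
the formal partial derivative of `a` with respect to `x_p`. -/
noncomputable def cPart {n : ℕ} (p : Fin n) (a : MvPolynomial (Fin n) (ZMod 2)) :
    MvPolynomial (Fin n) (ZMod 2) :=
  MvPolynomial.pderiv p a

/-- The independence rule on polynomials:
`∂_{x_p}(a₁,a₂) = Φ(1 + (1 + b₁b₂)·(1 + (b₁+c₁)(b₂+c₂)))`. -/
noncomputable def indRule {n : ℕ} (p : Fin n) (a₁ a₂ : MvPolynomial (Fin n) (ZMod 2)) :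
    MvPolynomial (Fin n) (ZMod 2) :=
  squash (1 + (1 + bPart p a₁ * bPart p a₂) *
    (1 + (bPart p a₁ + cPart p a₁) * (bPart p a₂ + cPart p a₂)))

open MvPolynomial

lemma bval_eval_poly {n : ℕ} (v : Fin n → Bool) (F : Fm (Fin n)) :
    MvPolynomial.eval (fun i => bval (v i)) F.poly = bval (F.eval v) := by
  induction F with
  | bot => simp [Fm.poly, Fm.eval, bval]
  | var i => simp [Fm.poly, Fm.eval]
  | not F ih =>
      simp only [Fm.poly, Fm.eval, map_add, map_one, ih]
      cases F.eval v <;> decide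
  | and F G ihF ihG =>
      simp only [Fm.poly, Fm.eval, map_mul, ihF, ihG]
      cases F.eval v <;> cases G.eval v <;> decide
  | or F G ihF ihG =>
      simp only [Fm.poly, Fm.eval, map_add, map_mul, ihF, ihG]
      cases F.eval v <;> cases G.eval v <;> decide
  | imp F G ihF ihG =>
      simp only [Fm.poly, Fm.eval, map_add, map_mul, map_one, ihF, ihG]
      cases F.eval v <;> cases G.eval v <;> decide
  | iff F G ihF ihG =>
      simp only [Fm.poly, Fm.eval, map_add, map_one, ihF, ihG]
      cases F.eval v <;> cases G.eval v <;> decide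

lemma eval_fieldIdeal_s18 {n : ℕ} (v : Fin n → Bool) {a : MvPolynomial (Fin n) (ZMod 2)}
    (h : a ∈ fieldIdeal n) : MvPolynomial.eval (fun i => bval (v i)) a = 0 := by
  have : fieldIdeal n ≤ RingHom.ker (MvPolynomial.eval (fun i => bval (v i))) := by
    rw [fieldIdeal, Ideal.span_le]
    rintro x ⟨i, rfl⟩
    simp only [SetLike.mem_coe, RingHom.mem_ker, map_add, map_pow, eval_X]
    cases v i <;> decide
  exact this h
lemma pow_idem {R : Type*} [CommRing R] {x : R} (h : x ^ 2 = x) (e : ℕ) :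
    x ^ e = x ^ min e 1 := by
  match e with
  | 0 => rfl
  | 1 => rfl
  | (e+2) =>
      have : x ^ (e+2) = x ^ (e+1) := by
        calc x ^ (e+2) = x ^ e * x ^ 2 := by ring
        _ = x ^ e * x ^ 1 := by rw [h, pow_one]
        _ = x ^ (e+1) := by ring
      rw [this, pow_idem h (e+1)]; congr 1; omega

lemma mk_squash {n : ℕ} (a : MvPolynomial (Fin n) (ZMod 2)) :
    Ideal.Quotient.mk (fieldIdeal n) (squash a) = Ideal.Quotient.mk (fieldIdeal n) a := by
  set Q := Ideal.Quotient.mk (fieldIdeal n) with hQ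
  have hXsq : ∀ i : Fin n, (Q (X i)) ^ 2 = Q (X i) := by
    intro i
    have hmem : X i + (X (R := ZMod 2)) i ^ 2 ∈ fieldIdeal n :=
      Ideal.subset_span ⟨i, rfl⟩
    have h0 : Q (X i) + Q (X i) ^ 2 = 0 := by
      rw [← map_pow, ← map_add, Ideal.Quotient.eq_zero_iff_mem]; exact hmem
    have := eq_neg_of_add_eq_zero_right h0
    rw [this, ← map_neg, CharTwo.neg_eq]
  have key : ∀ (m : Fin n →₀ ℕ) (c : ZMod 2),
      Q (monomial (Finsupp.mapRange (fun e => min e 1) (by simp) m) c) = Q (monomial m c) := by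
    intro m c
    rw [monomial_eq, monomial_eq, map_mul, map_mul]
    congr 1
    rw [Finsupp.prod_mapRange_index (fun a => pow_zero _)]
    unfold Finsupp.prod
    rw [map_prod, map_prod]
    exact Finset.prod_congr rfl fun i _ => by
      simp only [map_pow]; exact (pow_idem (hXsq i) (m i)).symm
  calc Q (squash a) = ∑ m ∈ a.support, Q (monomial m (a.coeff m)) := by
        rw [squash, map_sum]; exact Finset.sum_congr rfl fun m _ => key m _
  _ = Q a := by rw [← map_sum, support_sum_monomial_coeff]

lemma sub_squash_mem {n : ℕ} (a : MvPolynomial (Fin n) (ZMod 2)) :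
    a - squash a ∈ fieldIdeal n := by
  rw [← Ideal.Quotient.eq]; exact (mk_squash a).symm

lemma squash_mem_iff {n : ℕ} (a : MvPolynomial (Fin n) (ZMod 2)) {I : Ideal (MvPolynomial (Fin n) (ZMod 2))}
    (hI : fieldIdeal n ≤ I) : squash a ∈ I ↔ a ∈ I := by
  have h := hI (sub_squash_mem a)
  constructor
  · intro hs; simpa using I.add_mem h hs
  · intro ha; simpa using I.sub_mem ha h

lemma squash_multilinear {n : ℕ} (a : MvPolynomial (Fin n) (ZMod 2)) :
    ∀ m ∈ (squash a).support, ∀ i, m i ≤ 1 := by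
  intro m hm i
  rw [mem_support_iff, squash, coeff_sum] at hm
  obtain ⟨m0, _, hne⟩ := Finset.exists_ne_zero_of_sum_ne_zero hm
  rw [coeff_monomial] at hne
  split_ifs at hne with h
  · subst h; simp [Finsupp.mapRange_apply]
  · simp at hne
lemma multilinear_eq_zero {n : ℕ} (b : MvPolynomial (Fin n) (ZMod 2))
    (hml : ∀ m ∈ b.support, ∀ i, m i ≤ 1)
    (hv : ∀ v : Fin n → Bool, MvPolynomial.eval (fun i => bval (v i)) b = 0) : b = 0 := by
  by_contra hb
  have hne : b.support.Nonempty := support_nonempty.mpr hb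
  obtain ⟨m, hm, hmin⟩ := b.support.exists_min_image (fun m => m.support.card) hne
  set v : Fin n → Bool := fun i => decide (i ∈ m.support) with hvdef
  have hval : ∀ i, bval (v i) = if i ∈ m.support then 1 else 0 := by
    intro i
    by_cases h : i ∈ m.support
    · have hv : v i = true := by
        simp only [hvdef, decide_eq_true_eq]; exact h
      rw [hv, if_pos h]; rfl
    · have hv : v i = false := by
        simp only [hvdef, decide_eq_false_iff_not]; exact h
      rw [hv, if_neg h]; rfl
  have := hv v
  rw [eval_eq] at this
  rw [Finset.sum_eq_single m] at this
  · rw [Finset.prod_congr rfl (fun i hi => by rw [hval i, if_pos hi, one_pow])] at this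
    simp at this
    exact (mem_support_iff.mp hm) this
  · intro d hd hdm
    have hsub : ¬ d.support ⊆ m.support := by
      intro hsub
      apply hdm
      have hcard := hmin d hd
      have : d.support = m.support := Finset.eq_of_subset_of_card_le hsub hcard
      ext i
      by_cases h : i ∈ m.support
      · have h1 : d i ≤ 1 := hml d hd i
        have h2 : m i ≤ 1 := hml m hm i
        have hd1 : d i ≠ 0 := Finsupp.mem_support_iff.mp (this ▸ h)
        have hm1 : m i ≠ 0 := Finsupp.mem_support_iff.mp h
        omega
      · rw [Finsupp.notMem_support_iff.mp (this ▸ h), Finsupp.notMem_support_iff.mp h]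
    obtain ⟨i, hi, hni⟩ := Finset.not_subset.mp hsub
    rw [Finset.prod_eq_zero hi, mul_zero]
    rw [hval i, if_neg hni, zero_pow (Finsupp.mem_support_iff.mp hi)]
  · intro h; exact absurd hm h

lemma vanish_mem {n : ℕ} {a : MvPolynomial (Fin n) (ZMod 2)}
    (hv : ∀ v : Fin n → Bool, MvPolynomial.eval (fun i => bval (v i)) a = 0) :
    a ∈ fieldIdeal n := by
  have hsq : squash a = 0 := by
    apply multilinear_eq_zero _ (squash_multilinear a)
    intro v
    have h1 := eval_fieldIdeal_s18 v (sub_squash_mem a)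
    rw [map_sub, hv v] at h1
    linear_combination -h1
  have := sub_squash_mem a
  rwa [hsq, sub_zero] at this

noncomputable def delta {n : ℕ} (v : Fin n → Bool) : MvPolynomial (Fin n) (ZMod 2) :=
  ∏ i, (X i + C (bval (v i)) + 1)

lemma eval_delta {n : ℕ} (v w : Fin n → Bool) :
    MvPolynomial.eval (fun i => bval (w i)) (delta v) = if w = v then 1 else 0 := by
  rw [delta, map_prod]
  have hfac : ∀ i, MvPolynomial.eval (fun i => bval (w i)) (X i + C (bval (v i)) + 1)
      = if w i = v i then 1 else 0 := by
    intro i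
    simp only [map_add, eval_X, eval_C, map_one]
    cases hw : w i <;> cases hv : v i <;> simp [bval] <;> decide
  split_ifs with h
  · subst h
    rw [Finset.prod_congr rfl fun i _ => by rw [hfac i, if_pos rfl]]
    simp
  · obtain ⟨i, hi⟩ := Function.ne_iff.mp h
    rw [Finset.prod_eq_zero (Finset.mem_univ i)]
    rw [hfac i, if_neg hi]
lemma mem_ideal_iff {n : ℕ} (K : Finset (Fm (Fin n))) (a : MvPolynomial (Fin n) (ZMod 2)) :
    a ∈ Ideal.span ((fun G : Fm (Fin n) => 1 + G.poly) '' K) + fieldIdeal n ↔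
    ∀ v : Fin n → Bool, (∀ G ∈ K, G.eval v = true) →
      MvPolynomial.eval (fun i => bval (v i)) a = 0 := by
  constructor
  · intro h v hv
    rw [Submodule.add_eq_sup, Submodule.mem_sup] at h
    obtain ⟨x, hx, y, hy, rfl⟩ := h
    have hx0 : MvPolynomial.eval (fun i => bval (v i)) x = 0 := by
      have hle : Ideal.span ((fun G : Fm (Fin n) => 1 + G.poly) '' K) ≤
          RingHom.ker (MvPolynomial.eval (fun i => bval (v i))) := by
        rw [Ideal.span_le]
        rintro z ⟨G, hG, rfl⟩
        simp only [SetLike.mem_coe, RingHom.mem_ker, map_add, map_one, bval_eval_poly]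
        rw [hv G (by simpa using hG), ]
        decide
      exact hle hx
    rw [map_add, hx0, eval_fieldIdeal_s18 v hy, add_zero]
  · intro h
    set J := Ideal.span ((fun G : Fm (Fin n) => 1 + G.poly) '' K) + fieldIdeal n with hJ
    have hfle : fieldIdeal n ≤ J := by
      rw [hJ, Submodule.add_eq_sup]; exact le_sup_right
    have hsle : Ideal.span ((fun G : Fm (Fin n) => 1 + G.poly) '' K) ≤ J := by
      rw [hJ, Submodule.add_eq_sup]; exact le_sup_left
    set s : MvPolynomial (Fin n) (ZMod 2) :=
      ∑ v : Fin n → Bool, C (MvPolynomial.eval (fun i => bval (v i)) a) * delta v with hs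
    have hsum : a - s ∈ fieldIdeal n := by
      apply vanish_mem
      intro w
      rw [map_sub, hs, map_sum]
      rw [Finset.sum_congr rfl (fun v _ => by rw [map_mul, eval_C, eval_delta])]
      simp only [mul_ite, mul_one, mul_zero, Finset.sum_ite_eq, Finset.mem_univ, if_true]
      exact sub_self _
    have hsmem : s ∈ J := by
      rw [hs]
      apply Ideal.sum_mem
      intro v _
      by_cases hmodel : ∀ G ∈ K, G.eval v = true
      · rw [h v hmodel, map_zero, zero_mul]; exact J.zero_mem
      · push_neg at hmodel
        obtain ⟨G, hG, hGv⟩ := hmodel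
        have hGv' : G.eval v = false := by simpa using hGv
        set g := G.poly with hg
        have hdelta : delta v = (1 + g) * delta v + g * delta v := by
          rw [← add_mul]
          have h1g : 1 + g + g = 1 := by
            rw [add_assoc, CharTwo.add_self_eq_zero, add_zero]
          rw [h1g, one_mul]
        have h1 : (1 + g) * delta v ∈ J := by
          apply hsle
          exact Ideal.mul_mem_right _ _ (Ideal.subset_span ⟨G, by simpa using hG, rfl⟩)
        have h2 : g * delta v ∈ J := by
          apply hfle
          apply vanish_mem
          intro w
          rw [map_mul, eval_delta]
          by_cases hwv : w = v
          · rw [if_pos hwv, hwv, hg, bval_eval_poly, hGv', mul_one]; rfl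
          · rw [if_neg hwv, mul_zero]
        rw [hdelta, mul_add]
        exact J.add_mem (Ideal.mul_mem_left _ _ h1) (Ideal.mul_mem_left _ _ h2)
    have := J.add_mem (hfle hsum) hsmem
    rwa [sub_add_cancel] at this
/-- Characterization of sensitivity of `F` in `p` with respect to `K`. -/
theorem stmt18 {n : ℕ} (p : Fin n) (F : Fm (Fin n)) (K : Finset (Fm (Fin n)))
    (hp : p ∈ F.vars) :
    ((¬ ∀ v : Fin n → Bool, (∀ G ∈ K, G.eval v = true) →
        (Fm.iff (substNeg p F) F).eval v = true) ↔
      (∃ v : Fin n → Bool, (∀ G ∈ K, G.eval v = true) ∧ (derivFm p F).eval v = true)) ∧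
    ((¬ ∀ v : Fin n → Bool, (∀ G ∈ K, G.eval v = true) →
        (Fm.iff (substNeg p F) F).eval v = true) ↔
      squash (derivFm p F).poly ∉
        Ideal.span ((fun G : Fm (Fin n) => 1 + G.poly) '' K) + fieldIdeal n) := by
  have hderiv : ∀ v : Fin n → Bool,
      (derivFm p F).eval v = !(Fm.iff (substNeg p F) F).eval v := fun v => rfl
  have key : ∀ v : Fin n → Bool,
      ((derivFm p F).eval v = true ↔ ¬ (Fm.iff (substNeg p F) F).eval v = true) := by
    intro v; rw [hderiv]; cases (Fm.iff (substNeg p F) F).eval v <;> simp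
  have hpt : ∀ v : Fin n → Bool,
      ((Fm.iff (substNeg p F) F).eval v = true ↔
        MvPolynomial.eval (fun i => bval (v i)) (derivFm p F).poly = 0) := by
    intro v
    rw [bval_eval_poly, hderiv]
    cases (Fm.iff (substNeg p F) F).eval v <;> simp [bval] <;> decide
  constructor
  · rw [not_forall]
    apply exists_congr; intro v
    rw [_root_.not_imp]
    exact and_congr_right fun _ => (key v).symm
  · rw [squash_mem_iff _ (by rw [Submodule.add_eq_sup]; exact le_sup_right),
      mem_ideal_iff, not_forall, not_forall]
    apply exists_congr; intro v
    rw [_root_.not_imp, _root_.not_imp]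
    exact and_congr_right fun _ => not_congr (hpt v)
end

section
/- For any forgetting operator δ_p and finite knowledge base K, δ_p[K] is logically equivalent to the union of {F ∈ K : p does not occur in F} with δ_p[{F ∈ K : p occurs in F}]. -/
/-- `δ_p[K]` is equivalent to the formulas of `K` without `p` together with
`δ_p` applied to the formulas of `K` containing `p`. -/
theorem stmt19 {V : Type} (p : V) (δ : Fm V → Fm V → Fm V) (hδ : IsForgetting p δ)
    (K : Set (Fm V)) (hK : K.Finite) :
    ∀ v : V → Bool,
      (∀ H ∈ Set.image2 δ K K, H.eval v = true) ↔
      (∀ H ∈ ({F ∈ K | p ∉ F.vars} ∪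
          Set.image2 δ {F ∈ K | p ∈ F.vars} {F ∈ K | p ∈ F.vars}), H.eval v = true) := by

  intro v
  constructor
  · intro h H hH
    rcases hH with ⟨hHK, hp⟩ | ⟨F, hF, G, hG, rfl⟩
    · have hδH := h (δ H H) (Set.mem_image2_of_mem hHK hHK)
      exact ((hδ.equiv H H v).1 hδH) H ⟨hp, fun w hw => hw H (by simp)⟩
    · exact h _ (Set.mem_image2_of_mem hF.1 hG.1)
  · intro h F hF
    obtain ⟨A, hA, B, hB, rfl⟩ := hF
    by_cases hpA : p ∈ A.vars <;> by_cases hpB : p ∈ B.vars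
    · exact h _ (Or.inr (Set.mem_image2_of_mem ⟨hA, hpA⟩ ⟨hB, hpB⟩))
    · -- p ∈ A.vars, p ∉ B.vars
      have hBv : B.eval v = true := h B (Or.inl ⟨hB, hpB⟩)
      have hAA : (δ A A).eval v = true :=
        h _ (Or.inr (Set.mem_image2_of_mem ⟨hA, hpA⟩ ⟨hA, hpA⟩))
      refine (hδ.equiv A B v).2 ?_
      intro H ⟨hpH, hEnt⟩
      have himp : (B.imp H).eval v = true := by
        refine ((hδ.equiv A A v).1 hAA) (B.imp H) ⟨?_, ?_⟩
        · simpa [Fm.vars] using And.intro hpB hpH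
        · intro w hw
          have hAw : A.eval w = true := hw A (by simp)
          simp only [Fm.eval, Bool.or_eq_true, Bool.not_eq_true']
          rcases hBw : B.eval w with _ | _
          · exact Or.inl rfl
          · exact Or.inr (hEnt w (by intro G hG; rcases hG with rfl | rfl <;> simp [hAw, hBw]))
      simpa [Fm.eval, hBv] using himp
    · -- p ∉ A.vars, p ∈ B.vars
      have hAv : A.eval v = true := h A (Or.inl ⟨hA, hpA⟩)
      have hBB : (δ B B).eval v = true :=
        h _ (Or.inr (Set.mem_image2_of_mem ⟨hB, hpB⟩ ⟨hB, hpB⟩))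
      refine (hδ.equiv A B v).2 ?_
      intro H ⟨hpH, hEnt⟩
      have himp : (A.imp H).eval v = true := by
        refine ((hδ.equiv B B v).1 hBB) (A.imp H) ⟨?_, ?_⟩
        · simpa [Fm.vars] using And.intro hpA hpH
        · intro w hw
          have hBw : B.eval w = true := hw B (by simp)
          simp only [Fm.eval, Bool.or_eq_true, Bool.not_eq_true']
          rcases hAw : A.eval w with _ | _
          · exact Or.inl rfl
          · exact Or.inr (hEnt w (by intro G hG; rcases hG with rfl | rfl <;> simp [hAw, hBw]))
      simpa [Fm.eval, hAv] using himp
    · -- p ∉ A.vars, p ∉ B.vars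
      have hAv : A.eval v = true := h A (Or.inl ⟨hA, hpA⟩)
      have hBv : B.eval v = true := h B (Or.inl ⟨hB, hpB⟩)
      refine (hδ.equiv A B v).2 ?_
      intro H ⟨hpH, hEnt⟩
      exact hEnt v (by intro G hG; rcases hG with rfl | rfl <;> simp [hAv, hBv])
end
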